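/- Let φ : ℂ² → ℝ be continuous on the closed unit ball B̄ = {z : ‖z‖ ≤ 1}, and suppose there exist a constant c > 0 and a function ε with φ(z) = Q(z) + ε(z), where Q(z) ≥ c‖z‖² for all z and ε(z)/‖z‖² → 0 as z → 0. Then there exist λ > 0 and radii 0 < r < r' < 1 such that the function ρ(z) = λ(1 + ‖z‖²) satisfies ρ(z) > φ(z) for every z with ‖z‖ ≤ r, and ρ(z) < φ(z) for every z with ‖z‖ = r'. -/

import Mathlib

/-!
Near the origin the error `ε = o(‖z‖²)` is absorbed by half of the quadratic lower bound, so
`φ z ≥ (c/2)‖z‖²` on a small ball. Fix a sphere of radius `r'` inside that ball and take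
`λ = c r'² / 4`; then `λ(1 + r'²) < (c/2) r'² ≤ φ` on the sphere. Since `φ(0) = 0 < λ`,
continuity gives `φ < λ ≤ ρ` on a smaller closed ball.
-/

open Asymptotics Filter Topology

/-- `C2` is the two-dimensional complex Euclidean space ℂ² with its standard
Hermitian norm. -/
abbrev C2 := EuclideanSpace ℂ (Fin 2)

section ComparisonPotential

variable {E : Type*} [NormedAddCommGroup E]

theorem eventually_half_mul_le_add_of_isLittleO {α : Type*} {l : Filter α}
    {Q ε g : α → ℝ} {c : ℝ} (hc : 0 < c) (hg : ∀ x, 0 ≤ g x) (hQ : ∀ x, c * g x ≤ Q x)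
    (hε : ε =o[l] g) : ∀ᶠ x in l, c / 2 * g x ≤ Q x + ε x := by
  filter_upwards [hε.bound (half_pos hc)] with x hx
  rw [Real.norm_eq_abs, Real.norm_of_nonneg (hg x)] at hx
  linarith [neg_abs_le (ε x), hQ x]

theorem exists_radius_lower_bound_on_sphere {φ : E → ℝ} {a : ℝ}
    (h : ∀ᶠ z in 𝓝 0, a * ‖z‖ ^ 2 ≤ φ z) :
    ∃ r' : ℝ, 0 < r' ∧ r' ≤ 1 / 2 ∧ ∀ z : E, ‖z‖ = r' → a * r' ^ 2 ≤ φ z := by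
  obtain ⟨δ, hδ, hball⟩ := Metric.nhds_basis_closedBall.eventually_iff.mp h
  refine ⟨min δ (1 / 2), by positivity, min_le_right _ _, fun z hz => ?_⟩
  simpa [hz] using hball (by simp [hz] : z ∈ Metric.closedBall (0 : E) δ)

theorem exists_radius_lt_of_continuousAt {φ : E → ℝ} (hφ : ContinuousAt φ 0) {lam r' : ℝ}
    (hlam : φ 0 < lam) (hr' : 0 < r') :
    ∃ r : ℝ, 0 < r ∧ r < r' ∧ ∀ z : E, ‖z‖ ≤ r → φ z < lam := by
  obtain ⟨δ, hδ, hball⟩ :=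
    Metric.nhds_basis_closedBall.eventually_iff.mp (hφ.eventually_lt continuousAt_const hlam)
  refine ⟨min δ (r' / 2), by positivity, by linarith [min_le_right δ (r' / 2)], fun z hz => ?_⟩
  exact hball (by simpa using hz.trans (min_le_left _ _))

theorem exists_comparison_potential_of_eventually_le {φ : E → ℝ} (hφ : ContinuousAt φ 0)
    (hφ0 : φ 0 = 0) {a : ℝ} (ha : 0 < a) (h : ∀ᶠ z in 𝓝 0, a * ‖z‖ ^ 2 ≤ φ z) :
    ∃ lam > (0 : ℝ), ∃ r r' : ℝ, 0 < r ∧ r < r' ∧ r' < 1 ∧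
      (∀ z : E, ‖z‖ ≤ r → φ z < lam * (1 + ‖z‖ ^ 2)) ∧
      (∀ z : E, ‖z‖ = r' → lam * (1 + ‖z‖ ^ 2) < φ z) := by
  obtain ⟨r', hr'0, hr'half, hsphere⟩ := exists_radius_lower_bound_on_sphere h
  have hlam : 0 < a * r' ^ 2 / 2 := by positivity
  obtain ⟨r, hr0, hrr', hball⟩ :=
    exists_radius_lt_of_continuousAt hφ (hφ0 ▸ hlam) hr'0
  refine ⟨a * r' ^ 2 / 2, hlam, r, r', hr0, hrr', by linarith, fun z hz => ?_, fun z hz => ?_⟩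
  · nlinarith [hball z hz, sq_nonneg ‖z‖]
  · have hr'sq : r' ^ 2 ≤ 1 / 4 := by nlinarith
    rw [hz]
    nlinarith [hsphere z hz]

end ComparisonPotential

theorem exists_comparison_potential_general (φ Q ε : C2 → ℝ)
    (hφ : ContinuousOn φ (Metric.closedBall (0 : C2) 1))
    (b : C2 →ₗ[ℝ] C2 →ₗ[ℝ] ℝ)
    (hQ : ∀ z, Q z = b z z)
    (c : ℝ) (hc : 0 < c) (hQlb : ∀ z : C2, c * ‖z‖ ^ 2 ≤ Q z)
    (hφeq : ∀ z : C2, φ z = Q z + ε z)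
    (hε : (fun z : C2 => ε z) =o[𝓝 (0 : C2)] fun z : C2 => ‖z‖ ^ 2) :
    ∃ lam > (0 : ℝ), ∃ r r' : ℝ, 0 < r ∧ r < r' ∧ r' < 1 ∧
      (∀ z : C2, ‖z‖ ≤ r → φ z < lam * (1 + ‖z‖ ^ 2)) ∧
      (∀ z : C2, ‖z‖ = r' → lam * (1 + ‖z‖ ^ 2) < φ z) := by
  have hε0 : ε 0 = 0 := hε.isBigO.eq_zero_imp.self_of_nhds (by simp)
  have hφ0 : φ 0 = 0 := by simp [hφeq, hQ, hε0]
  have hlower : ∀ᶠ z in 𝓝 (0 : C2), c / 2 * ‖z‖ ^ 2 ≤ φ z := by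
    simpa only [← hφeq] using
      eventually_half_mul_le_add_of_isLittleO hc (fun z => by positivity) hQlb hε
  exact exists_comparison_potential_of_eventually_le
    (hφ.continuousAt (Metric.closedBall_mem_nhds 0 one_pos)) hφ0 (half_pos hc) hlower

/-- If `φ : ℂ² → ℝ` is continuous on the closed unit ball and has a minimum of
Morse type at the origin, i.e. `φ = Q + ε` with `Q` a quadratic form satisfying
`Q z ≥ c‖z‖²` for some `c > 0` and `ε(z) = o(‖z‖²)` as `z → 0`, then there
exist `λ > 0` and radii `0 < r < r' < 1` such that `ρ(z) = λ(1 + ‖z‖²)` is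
greater than `φ` on the closed ball of radius `r` and smaller than `φ` on the
sphere of radius `r'`. -/
theorem exists_comparison_potential (φ Q ε : C2 → ℝ)
    (hφ : ContinuousOn φ (Metric.closedBall (0 : C2) 1))
    (b : C2 →ₗ[ℝ] C2 →ₗ[ℝ] ℝ) (hb : ∀ x y, b x y = b y x)
    (hQ : ∀ z, Q z = b z z)
    (c : ℝ) (hc : 0 < c) (hQlb : ∀ z : C2, c * ‖z‖ ^ 2 ≤ Q z)
    (hφeq : ∀ z : C2, φ z = Q z + ε z)
    (hε : (fun z : C2 => ε z) =o[𝓝 (0 : C2)] fun z : C2 => ‖z‖ ^ 2) :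
    ∃ lam > (0 : ℝ), ∃ r r' : ℝ, 0 < r ∧ r < r' ∧ r' < 1 ∧
      (∀ z : C2, ‖z‖ ≤ r → φ z < lam * (1 + ‖z‖ ^ 2)) ∧
      (∀ z : C2, ‖z‖ = r' → lam * (1 + ‖z‖ ^ 2) < φ z) :=
  exists_comparison_potential_general φ Q ε hφ b hQ c hc hQlb hφeq hε
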